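/- arXiv:1907.06425 — 9 statements merged into one kernel-verified Lean document; each statement's English description precedes it below -/
import Mathlib

section
/- In a non-trivial 2-(v,k,λ) design, i.e., one with 2 < k < v−1, in which every point lies in exactly r blocks, one has λ·v < r² (in particular v < r²). -/
open Matrix


/-- In a non-trivial 2-(v,k,λ) design (2 < k < v−1) in which every point lies
in exactly r blocks, one has λ·v < r² (in particular v < r²). -/
theorem stmt_2 {P : Type*} [Fintype P] [DecidableEq P]
    (v r k lam : ℕ) (𝓑 : Finset (Finset P))
    (hv : Fintype.card P = v)
    (hk : ∀ B ∈ 𝓑, B.card = k)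
    (hk2 : 2 < k) (hkv : k < v - 1)
    (hlam1 : 1 ≤ lam)
    (hlam : ∀ x y : P, x ≠ y → (𝓑.filter (fun B => x ∈ B ∧ y ∈ B)).card = lam)
    (hr : ∀ x : P, (𝓑.filter (fun B => x ∈ B)).card = r) :
    lam * v < r ^ 2 ∧ v < r ^ 2 := by
  classical
  have hv5 : 5 ≤ v := by omega
  have hP : Nonempty P := Fintype.card_pos_iff.mp (by omega)
  obtain ⟨x₀⟩ := hP
  -- Lemma A : b * k = v * r
  have hbk : 𝓑.card * k = v * r := by
    have h1 : ∑ B ∈ 𝓑, B.card = ∑ x : P, (𝓑.filter (fun B => x ∈ B)).card := by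
      simp_rw [Finset.card_filter]
      rw [Finset.sum_comm]
      refine Finset.sum_congr rfl fun B _ => ?_
      rw [Finset.sum_ite_mem, Finset.univ_inter, Finset.sum_const, smul_eq_mul, mul_one]
    have h2 : ∑ B ∈ 𝓑, B.card = 𝓑.card * k := by
      rw [Finset.sum_congr rfl hk, Finset.sum_const, smul_eq_mul]
    have h3 : ∑ x : P, (𝓑.filter (fun B => x ∈ B)).card = v * r := by
      rw [Finset.sum_congr rfl fun x _ => hr x, Finset.sum_const, smul_eq_mul,
        Finset.card_univ, hv]
    omega
  -- Lemma B : lam * (v-1) = r * (k-1)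
  have hlv : lam * (v - 1) = r * (k - 1) := by
    have h1 : ∑ y ∈ Finset.univ.erase x₀, (𝓑.filter (fun B => x₀ ∈ B ∧ y ∈ B)).card
        = (v - 1) * lam := by
      rw [Finset.sum_congr rfl fun y hy => hlam x₀ y (Finset.ne_of_mem_erase hy).symm,
        Finset.sum_const, smul_eq_mul, Finset.card_erase_of_mem (Finset.mem_univ _),
        Finset.card_univ, hv]
    have h2 : ∑ y ∈ Finset.univ.erase x₀, (𝓑.filter (fun B => x₀ ∈ B ∧ y ∈ B)).card
        = r * (k - 1) := by
      simp_rw [Finset.card_filter]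
      rw [Finset.sum_comm]
      have inner : ∀ B ∈ 𝓑,
          (∑ y ∈ Finset.univ.erase x₀, if x₀ ∈ B ∧ y ∈ B then 1 else 0)
            = if x₀ ∈ B then k - 1 else 0 := by
        intro B hB
        by_cases hx : x₀ ∈ B
        · simp only [hx, true_and, if_true]
          rw [Finset.sum_ite_mem, Finset.sum_const, smul_eq_mul, mul_one]
          have : (Finset.univ.erase x₀) ∩ B = B.erase x₀ := by
            ext y; simp [and_comm]
          rw [this, Finset.card_erase_of_mem hx, hk B hB]
        · simp [hx]
      rw [Finset.sum_congr rfl inner, ← Finset.sum_filter, Finset.sum_const, smul_eq_mul, hr]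
    rw [mul_comm lam (v - 1)]
    omega
  have hkv' : k - 1 < v - 1 := by omega
  have hlamr : lam < r := by
    by_contra h
    push_neg at h
    have h1 : r * (k - 1) ≤ lam * (k - 1) := Nat.mul_le_mul_right _ h
    have h2 : lam * (k - 1) < lam * (v - 1) :=
      mul_lt_mul_of_pos_left hkv' (by omega)
    omega
  -- Fisher's inequality : v ≤ 𝓑.card
  have hvb : v ≤ 𝓑.card := by
    let M : Matrix P ↥𝓑 ℝ := fun x B => if x ∈ B.1 then 1 else 0
    have key : ∀ x y : P,
        (M * Mᵀ) x y = ((𝓑.filter (fun B => x ∈ B ∧ y ∈ B)).card : ℝ) := by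
      intro x y
      rw [Matrix.mul_apply, Finset.card_filter]
      push_cast
      rw [← Finset.sum_coe_sort 𝓑 (fun B => if x ∈ B ∧ y ∈ B then (1 : ℝ) else 0)]
      refine Finset.sum_congr rfl fun B _ => ?_
      by_cases h1 : x ∈ B.1 <;> by_cases h2 : y ∈ B.1 <;>
        (simp only [Matrix.transpose_apply]; simp [M, Matrix.transpose_apply, h1, h2])
    let C : Matrix Unit P ℝ := fun _ _ => Real.sqrt lam
    have hCC : ∀ x y : P, (Cᵀ * C) x y = (lam : ℝ) := by
      intro x y
      rw [Matrix.mul_apply]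
      simp only [Matrix.transpose_apply]; simp [C, Real.mul_self_sqrt (Nat.cast_nonneg lam)]
    have hdecomp : M * Mᵀ = Matrix.diagonal (fun _ => (r : ℝ) - lam) + Cᵀ * C := by
      ext x y
      rw [Matrix.add_apply, key, hCC]
      by_cases hxy : x = y
      · subst hxy
        have hfil : 𝓑.filter (fun B => x ∈ B ∧ x ∈ B) = 𝓑.filter (fun B => x ∈ B) :=
          Finset.filter_congr fun B _ => and_self_iff
        rw [hfil, hr x, Matrix.diagonal_apply_eq]
        ring
      · rw [hlam x y hxy, Matrix.diagonal_apply_ne _ hxy]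
        ring
    have hpd : (M * Mᵀ).PosDef := by
      rw [hdecomp]
      refine Matrix.PosDef.add_posSemidef (Matrix.PosDef.diagonal fun _ => ?_) ?_
      · have : (lam : ℝ) < r := by exact_mod_cast hlamr
        linarith
      · have : Cᴴ = Cᵀ := by ext u x; simp [Matrix.conjTranspose_apply]
        rw [← this]
        exact Matrix.posSemidef_conjTranspose_mul_self C
    have hrank : (M * Mᵀ).rank = Fintype.card P := Matrix.rank_of_isUnit _ hpd.isUnit
    have h1 : (M * Mᵀ).rank ≤ M.rank := Matrix.rank_mul_le_left M Mᵀ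
    have h2 : M.rank ≤ Fintype.card ↥𝓑 := Matrix.rank_le_card_width M
    have h3 : Fintype.card ↥𝓑 = 𝓑.card := Fintype.card_coe 𝓑
    omega
  have hrk : k ≤ r := by
    have h1 : v * k ≤ v * r := by
      calc v * k ≤ 𝓑.card * k := Nat.mul_le_mul_right _ hvb
        _ = v * r := hbk
    exact Nat.le_of_mul_le_mul_left h1 (by omega)
  have hmain : lam * v < r ^ 2 := by
    have h1 : lam * v = r * (k - 1) + lam := by
      have : v - 1 + 1 = v := by omega
      calc lam * v = lam * (v - 1 + 1) := by rw [this]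
        _ = lam * (v - 1) + lam := by ring
        _ = r * (k - 1) + lam := by rw [hlv]
    have h2 : r * (k - 1) + lam < r * (k - 1) + r := by omega
    have h3 : r * (k - 1) + r = r * k := by
      have : k - 1 + 1 = k := by omega
      calc r * (k - 1) + r = r * (k - 1 + 1) := by ring
        _ = r * k := by rw [this]
    have h4 : r * k ≤ r * r := Nat.mul_le_mul_left _ hrk
    calc lam * v = r * (k - 1) + lam := h1
      _ < r * k := by omega
      _ ≤ r * r := h4
      _ = r ^ 2 := (sq r).symm
  exact ⟨hmain, lt_of_le_of_lt (Nat.le_mul_of_pos_left v (by omega)) hmain⟩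
end

section
/- Let G be a finite flag-transitive automorphism group of a 2-(v,k,λ) design with 2 ≤ k in which every point lies in exactly r blocks, and suppose gcd(r,λ) = 1. Then for any two distinct points α and β, r divides the length of the orbit of β under the stabilizer G_α; that is, r divides every non-trivial subdegree of G. -/
open Pointwise

/-!
Let `Δ` be the `G_α`-orbit of `β`. Counting the pairs `(γ, B)` with `γ ∈ Δ` and `α, γ ∈ B`
by points gives `|Δ| λ`. Since `G_α` preserves `Δ` and, by flag-transitivity, acts transitively
on the `r` blocks through `α`, every such block meets `Δ` in the same number of points, so the
count is also a multiple of `r`. Hence `r ∣ |Δ| λ`, and `gcd(r, λ) = 1` gives `r ∣ |Δ|`.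
-/

namespace Finset

theorem card_dvd_sum_of_forall_eq {ι R : Type*} [Semiring R] {s : Finset ι} {f : ι → R}
    (h : ∀ x ∈ s, ∀ y ∈ s, f x = f y) : (#s : R) ∣ ∑ x ∈ s, f x := by
  obtain rfl | ⟨x₀, hx₀⟩ := s.eq_empty_or_nonempty
  · simp
  · rw [sum_congr rfl fun x hx ↦ h x hx x₀ hx₀, sum_const, nsmul_eq_mul]
    exact dvd_mul_right _ _

end Finset

open Finset MulAction

section

variable {P : Type*} [DecidableEq P] {𝓑 : Finset (Finset P)} {r lam : ℕ} {α : P}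

theorem sum_card_inter_blocks_through_eq (Δ : Finset P) (hα : α ∉ Δ)
    (hlam : ∀ x y : P, x ≠ y → #{B ∈ 𝓑 | x ∈ B ∧ y ∈ B} = lam) :
    ∑ B ∈ 𝓑 with α ∈ B, #(Δ ∩ B) = #Δ * lam :=
  sum_card_inter fun γ hγ ↦ by
    rw [filter_filter]
    exact hlam α γ (ne_of_mem_of_not_mem hγ hα).symm

theorem card_inter_blocks_through_eq {G : Type*} [Group G] [MulAction G P] {Δ : Finset P}
    (hΔ : ∀ g ∈ stabilizer G α, g • Δ = Δ)
    (htrans : ∀ B₁ ∈ 𝓑, ∀ B₂ ∈ 𝓑, α ∈ B₁ → α ∈ B₂ → ∃ g ∈ stabilizer G α, g • B₁ = B₂) :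
    ∀ B₁ ∈ {B ∈ 𝓑 | α ∈ B}, ∀ B₂ ∈ {B ∈ 𝓑 | α ∈ B}, #(Δ ∩ B₁) = #(Δ ∩ B₂) := by
  intro B₁ hB₁ B₂ hB₂
  rw [mem_filter] at hB₁ hB₂
  obtain ⟨g, hg, rfl⟩ := htrans B₁ hB₁.1 B₂ hB₂.1 hB₁.2 hB₂.2
  rw [← card_smul_finset g, smul_finset_inter, hΔ g hg]

theorem dvd_card_of_stabilizer_invariant {G : Type*} [Group G] [MulAction G P]
    (hlam : ∀ x y : P, x ≠ y → #{B ∈ 𝓑 | x ∈ B ∧ y ∈ B} = lam)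
    (hr : #{B ∈ 𝓑 | α ∈ B} = r) (hcop : Nat.gcd r lam = 1)
    (htrans : ∀ B₁ ∈ 𝓑, ∀ B₂ ∈ 𝓑, α ∈ B₁ → α ∈ B₂ → ∃ g ∈ stabilizer G α, g • B₁ = B₂)
    {Δ : Finset P} (hα : α ∉ Δ) (hΔ : ∀ g ∈ stabilizer G α, g • Δ = Δ) : r ∣ #Δ := by
  have hdvd : r ∣ #Δ * lam := by
    rw [← hr, ← sum_card_inter_blocks_through_eq Δ hα hlam]
    exact card_dvd_sum_of_forall_eq (card_inter_blocks_through_eq hΔ htrans)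
  exact Nat.Coprime.dvd_of_dvd_mul_right hcop hdvd

end

theorem stmt_5_general {P : Type*} [Fintype P] [DecidableEq P]
    (r lam : ℕ) (𝓑 : Finset (Finset P))
    (hlam : ∀ x y : P, x ≠ y → (𝓑.filter (fun B => x ∈ B ∧ y ∈ B)).card = lam)
    (hr : ∀ x : P, (𝓑.filter (fun B => x ∈ B)).card = r)
    (hcop : Nat.gcd r lam = 1)
    {G : Type*} [Group G] [MulAction G P]
    (hft : ∀ B₁ ∈ 𝓑, ∀ B₂ ∈ 𝓑, ∀ α₁ ∈ B₁, ∀ α₂ ∈ B₂,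
      ∃ g : G, g • α₁ = α₂ ∧ g • B₁ = B₂)
    (α β : P) (hαβ : α ≠ β) :
    r ∣ Nat.card (MulAction.orbit (MulAction.stabilizer G α) β) := by
  classical
  have htrans : ∀ B₁ ∈ 𝓑, ∀ B₂ ∈ 𝓑, α ∈ B₁ → α ∈ B₂ → ∃ g ∈ stabilizer G α, g • B₁ = B₂ :=
    fun B₁ hB₁ B₂ hB₂ h₁ h₂ ↦ (hft B₁ hB₁ B₂ hB₂ α h₁ α h₂).imp fun _ ↦ id
  have hα : α ∉ (orbit (stabilizer G α) β).toFinset := by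
    rw [Set.mem_toFinset]
    rintro ⟨h, hh⟩
    rw [smul_eq_iff_eq_inv_smul] at hh
    exact hαβ (hh.trans (h⁻¹).prop).symm
  rw [Nat.card_eq_card_toFinset]
  refine dvd_card_of_stabilizer_invariant hlam (hr α) hcop htrans hα fun g hg ↦ ?_
  rw [← Set.toFinset_smul_set]
  exact Set.toFinset_congr (smul_orbit (⟨g, hg⟩ : stabilizer G α) β)

/-- If G is a finite flag-transitive automorphism group of a 2-(v,k,λ) design
with 2 ≤ k and gcd(r,λ) = 1, then for any two distinct points α, β, r divides
the length of the orbit of β under the stabilizer G_α, i.e. r divides every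
non-trivial subdegree of G. -/
theorem stmt_5 {P : Type*} [Fintype P] [DecidableEq P]
    (v r k lam : ℕ) (𝓑 : Finset (Finset P))
    (hv : Fintype.card P = v)
    (hk : ∀ B ∈ 𝓑, B.card = k)
    (hk2 : 2 ≤ k)
    (hlam1 : 1 ≤ lam)
    (hlam : ∀ x y : P, x ≠ y → (𝓑.filter (fun B => x ∈ B ∧ y ∈ B)).card = lam)
    (hr : ∀ x : P, (𝓑.filter (fun B => x ∈ B)).card = r)
    (hcop : Nat.gcd r lam = 1)
    {G : Type*} [Group G] [Finite G] [MulAction G P]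
    (hG : ∀ (g : G), ∀ B ∈ 𝓑, g • B ∈ 𝓑)
    (hft : ∀ B₁ ∈ 𝓑, ∀ B₂ ∈ 𝓑, ∀ α₁ ∈ B₁, ∀ α₂ ∈ B₂,
      ∃ g : G, g • α₁ = α₂ ∧ g • B₁ = B₂)
    (α β : P) (hαβ : α ≠ β) :
    r ∣ Nat.card (MulAction.orbit (MulAction.stabilizer G α) β) :=
  stmt_5_general r lam 𝓑 hlam hr hcop hft α β hαβ
end

section
/- Let 𝒟 be a 2-(v,k,λ) design with 2 ≤ k in which every point lies in exactly r blocks, with gcd(r,λ) = 1, and let G be an automorphism group of 𝒟 whose action on the point set 𝒫 is 2-transitive. Then G is flag-transitive. -/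
/-!
Fix a point `α`. Its stabilizer `G_α` is transitive on the other `v - 1` points, so every
`G_α`-invariant family `O` of blocks through `α` meets each point `β ≠ α` in the same number
`m` of blocks. Counting the incident pairs `(β, B)` with `β ≠ α` and `B ∈ O` in two ways gives
`(v - 1) m = |O| (k - 1)`; the same count for all `r` blocks through `α` gives
`(v - 1) λ = r (k - 1)`. Hence `|O| λ = r m`, and `gcd(r, λ) = 1` forces `r ∣ |O|`, so a
nonempty `O` contains all blocks through `α`. Thus `G_α` is transitive on the blocks through
`α`, and together with point-transitivity this is flag-transitivity.
-/

open Finset Pointwise MulAction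

lemma Nat.eq_of_coprime_of_mul_eq_mul {v r lam o m k : ℕ} (hv : 0 < v)
    (hr : v * lam = r * k) (ho : v * m = o * k) (hcop : r.Coprime lam)
    (ho_pos : 0 < o) (ho_le : o ≤ r) : o = r := by
  have hkey : o * lam = r * m := by
    refine Nat.eq_of_mul_eq_mul_left hv ?_
    calc v * (o * lam) = o * (r * k) := by rw [← hr]; ring
      _ = r * (v * m) := by rw [ho]; ring
      _ = v * (r * m) := by ring
  have hdvd : r ∣ o := hcop.dvd_of_dvd_mul_right ⟨m, hkey⟩
  exact le_antisymm ho_le (Nat.le_of_dvd ho_pos hdvd)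

section

variable {P : Type*} [DecidableEq P]

lemma card_mul_pred_eq_pred_card_mul [Fintype P] {T : Finset (Finset P)} {α : P} {k c : ℕ}
    (hT : ∀ B ∈ T, α ∈ B ∧ #B = k) (hc : ∀ β ≠ α, #{B ∈ T | β ∈ B} = c) :
    #T * (k - 1) = (Fintype.card P - 1) * c :=
  calc #T * (k - 1) = ∑ B ∈ T, #(univ.erase α ∩ B) := by
        rw [sum_const_nat]
        intro B hB
        rw [erase_inter, univ_inter, card_erase_of_mem (hT B hB).1, (hT B hB).2]
    _ = #(univ.erase α) * c := sum_card_inter fun β hβ ↦ hc β (ne_of_mem_erase hβ)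
    _ = (Fintype.card P - 1) * c := by rw [card_erase_of_mem (mem_univ α), card_univ]

variable {G : Type*} [Group G] [MulAction G P]

lemma card_filter_smul_mem_eq {H : Subgroup G} {O : Finset (Finset P)}
    (hO : ∀ h ∈ H, ∀ B ∈ O, h • B ∈ O) {g : G} (hg : g ∈ H) (β : P) :
    #{B ∈ O | g • β ∈ B} = #{B ∈ O | β ∈ B} := by
  refine card_nbij' (g⁻¹ • ·) (g • ·) ?_ ?_ ?_ ?_
  · intro B hB
    simp only [mem_coe, mem_filter] at hB ⊢
    exact ⟨hO _ (H.inv_mem hg) B hB.1, by simpa using smul_mem_smul_finset (a := g⁻¹) hB.2⟩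
  · intro B hB
    simp only [mem_coe, mem_filter] at hB ⊢
    exact ⟨hO g hg B hB.1, smul_mem_smul_finset hB.2⟩
  · intro B _
    exact smul_inv_smul g B
  · intro B _
    exact inv_smul_smul g B

variable [Fintype P] (𝓑 : Finset (Finset P)) {r k lam : ℕ}

lemma eq_filter_mem_of_stabilizer_invariant
    (hk : ∀ B ∈ 𝓑, B.card = k) (hk2 : 2 ≤ k)
    (hlam : ∀ x y : P, x ≠ y → (𝓑.filter (fun B => x ∈ B ∧ y ∈ B)).card = lam)
    (hr : ∀ x : P, (𝓑.filter (fun B => x ∈ B)).card = r) (hcop : Nat.gcd r lam = 1)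
    (h2trans : ∀ a b c d : P, a ≠ b → c ≠ d → ∃ g : G, g • a = c ∧ g • b = d)
    {α : P} {O : Finset (Finset P)} (hOS : O ⊆ {B ∈ 𝓑 | α ∈ B}) (hO : O.Nonempty)
    (hOinv : ∀ g ∈ stabilizer G α, ∀ B ∈ O, g • B ∈ O) :
    O = {B ∈ 𝓑 | α ∈ B} := by
  have hincid : ∀ B ∈ O, B ∈ 𝓑 ∧ α ∈ B := fun B hB ↦ mem_filter.mp (hOS hB)
  obtain ⟨B₀, hB₀⟩ := hO
  obtain ⟨β₀, hβ₀, hβ₀α⟩ :=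
    exists_mem_ne (by rw [hk B₀ (hincid B₀ hB₀).1]; omega) α
  have hv : 0 < Fintype.card P - 1 := by
    have := Fintype.one_lt_card_iff.mpr ⟨β₀, α, hβ₀α⟩
    omega
  have hS : #{B ∈ 𝓑 | α ∈ B} * (k - 1) = (Fintype.card P - 1) * lam := by
    refine card_mul_pred_eq_pred_card_mul (α := α) (fun B hB ↦ ?_) fun β hβ ↦ ?_
    · rw [mem_filter] at hB
      exact ⟨hB.2, hk B hB.1⟩
    · rw [filter_filter, ← hlam α β hβ.symm]
  have hOcount : #O * (k - 1) = (Fintype.card P - 1) * #{B ∈ O | β₀ ∈ B} := by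
    refine card_mul_pred_eq_pred_card_mul
      (fun B hB ↦ ⟨(hincid B hB).2, hk B (hincid B hB).1⟩) fun β hβ ↦ ?_
    -- `G_α` moves `β₀` to `β`, and `O` is `G_α`-invariant.
    obtain ⟨g, hgα, hgβ⟩ := h2trans α β₀ α β hβ₀α.symm hβ.symm
    rw [← hgβ]
    exact card_filter_smul_mem_eq hOinv hgα β₀
  have hcard : #O = #{B ∈ 𝓑 | α ∈ B} :=
    Nat.eq_of_coprime_of_mul_eq_mul hv hS.symm hOcount.symm (by rwa [hr α])
      (card_pos.mpr ⟨B₀, hB₀⟩) (card_le_card hOS)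
  exact eq_of_subset_of_card_le hOS hcard.ge

lemma exists_mem_stabilizer_smul_eq
    (hk : ∀ B ∈ 𝓑, B.card = k) (hk2 : 2 ≤ k)
    (hlam : ∀ x y : P, x ≠ y → (𝓑.filter (fun B => x ∈ B ∧ y ∈ B)).card = lam)
    (hr : ∀ x : P, (𝓑.filter (fun B => x ∈ B)).card = r) (hcop : Nat.gcd r lam = 1)
    (hG : ∀ (g : G), ∀ B ∈ 𝓑, g • B ∈ 𝓑)
    (h2trans : ∀ a b c d : P, a ≠ b → c ≠ d → ∃ g : G, g • a = c ∧ g • b = d)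
    {α : P} {B₁ B₂ : Finset P} (hB₁ : B₁ ∈ 𝓑) (hB₂ : B₂ ∈ 𝓑) (hα₁ : α ∈ B₁) (hα₂ : α ∈ B₂) :
    ∃ g ∈ stabilizer G α, g • B₁ = B₂ := by
  classical
  set O : Finset (Finset P) := {B ∈ 𝓑 | α ∈ B ∧ ∃ g ∈ stabilizer G α, g • B₁ = B}
  have hOS : O ⊆ {B ∈ 𝓑 | α ∈ B} := fun B hB ↦ by
    rw [mem_filter] at hB ⊢
    exact ⟨hB.1, hB.2.1⟩
  have hOinv : ∀ g ∈ stabilizer G α, ∀ B ∈ O, g • B ∈ O := by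
    rintro g hg B hB
    obtain ⟨hB𝓑, hαB, h, hh, rfl⟩ := mem_filter.mp hB
    refine mem_filter.mpr ⟨hG g _ hB𝓑, ?_, g * h, mul_mem hg hh, mul_smul g h B₁⟩
    rw [← mem_stabilizer_iff.mp hg]
    exact smul_mem_smul_finset hαB
  have hB₁O : B₁ ∈ O := mem_filter.mpr ⟨hB₁, hα₁, 1, one_mem _, one_smul G B₁⟩
  have hB₂O : B₂ ∈ O := by
    rw [eq_filter_mem_of_stabilizer_invariant 𝓑 hk hk2 hlam hr hcop h2trans hOS ⟨B₁, hB₁O⟩ hOinv]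
    exact mem_filter.mpr ⟨hB₂, hα₂⟩
  exact (mem_filter.mp hB₂O).2.2

end

theorem stmt_9_general {P : Type*} [Fintype P] [DecidableEq P]
    (r k lam : ℕ) (𝓑 : Finset (Finset P))
    (hk : ∀ B ∈ 𝓑, B.card = k)
    (hk2 : 2 ≤ k)
    (hlam : ∀ x y : P, x ≠ y → (𝓑.filter (fun B => x ∈ B ∧ y ∈ B)).card = lam)
    (hr : ∀ x : P, (𝓑.filter (fun B => x ∈ B)).card = r)
    (hcop : Nat.gcd r lam = 1)
    {G : Type*} [Group G] [MulAction G P]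
    (hG : ∀ (g : G), ∀ B ∈ 𝓑, g • B ∈ 𝓑)
    (h2trans : ∀ a b c d : P, a ≠ b → c ≠ d → ∃ g : G, g • a = c ∧ g • b = d) :
    ∀ B₁ ∈ 𝓑, ∀ B₂ ∈ 𝓑, ∀ α₁ ∈ B₁, ∀ α₂ ∈ B₂,
      ∃ g : G, g • α₁ = α₂ ∧ g • B₁ = B₂ := by
  intro B₁ hB₁ B₂ hB₂ α₁ hα₁ α₂ hα₂
  have hB₁_card : 1 < #B₁ := by rw [hk B₁ hB₁]; omega
  obtain ⟨β₁, -, hβ₁⟩ := exists_mem_ne hB₁_card α₁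
  obtain ⟨β₂, -, hβ₂⟩ := exists_mem_ne (hB₁_card.trans_le (card_le_univ B₁)) α₂
  obtain ⟨g, hg, -⟩ := h2trans α₁ β₁ α₂ β₂ hβ₁.symm hβ₂.symm
  have hα₂gB₁ : α₂ ∈ g • B₁ := hg ▸ smul_mem_smul_finset hα₁
  obtain ⟨h, hh, hhB⟩ := exists_mem_stabilizer_smul_eq 𝓑 hk hk2 hlam hr hcop hG h2trans
    (hG g B₁ hB₁) hB₂ hα₂gB₁ hα₂
  exact ⟨h * g, by rw [mul_smul, hg, mem_stabilizer_iff.mp hh], by rw [mul_smul, hhB]⟩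

/-- If 𝒟 is a 2-(v,k,λ) design with 2 ≤ k in which every point lies in exactly
r blocks, gcd(r,λ) = 1, and G is an automorphism group of 𝒟 which is
2-transitive on points, then G is flag-transitive. -/
theorem stmt_9 {P : Type*} [Fintype P] [DecidableEq P]
    (v r k lam : ℕ) (𝓑 : Finset (Finset P))
    (hv : Fintype.card P = v)
    (hk : ∀ B ∈ 𝓑, B.card = k)
    (hk2 : 2 ≤ k)
    (hlam1 : 1 ≤ lam)
    (hlam : ∀ x y : P, x ≠ y → (𝓑.filter (fun B => x ∈ B ∧ y ∈ B)).card = lam)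
    (hr : ∀ x : P, (𝓑.filter (fun B => x ∈ B)).card = r)
    (hcop : Nat.gcd r lam = 1)
    {G : Type*} [Group G] [Finite G] [MulAction G P]
    (hG : ∀ (g : G), ∀ B ∈ 𝓑, g • B ∈ 𝓑)
    (h2trans : ∀ a b c d : P, a ≠ b → c ≠ d → ∃ g : G, g • a = c ∧ g • b = d) :
    ∀ B₁ ∈ 𝓑, ∀ B₂ ∈ 𝓑, ∀ α₁ ∈ B₁, ∀ α₂ ∈ B₂,
      ∃ g : G, g • α₁ = α₂ ∧ g • B₁ = B₂ :=
  stmt_9_general r k lam 𝓑 hk hk2 hlam hr hcop hG h2trans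
end

section
/- Let 𝒟 be a non-trivial 2-(v,k,λ) design (2 < k < v−1) in which every point lies in exactly r blocks, with gcd(r,λ) = 1, and let G be a finite flag-transitive automorphism group of 𝒟. Then |G| < |G_α|³ for every point α, where G_α is the stabilizer of α. -/
open Pointwise

section aux

variable {P : Type*} [Fintype P] [DecidableEq P]

private lemma flag_count_aux (k r : ℕ) (𝓑 : Finset (Finset P))
    (hk : ∀ B ∈ 𝓑, B.card = k)
    (hr : ∀ x : P, (𝓑.filter (fun B => x ∈ B)).card = r) :
    𝓑.card * k = Fintype.card P * r := by
  classical
  have key : ∑ B ∈ 𝓑, B.card = ∑ x : P, (𝓑.filter (fun B => x ∈ B)).card := by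
    calc ∑ B ∈ 𝓑, B.card
        = ∑ B ∈ 𝓑, ∑ x : P, (if x ∈ B then 1 else 0) := by
          refine Finset.sum_congr rfl fun B _ => ?_
          rw [Finset.sum_ite_mem, Finset.univ_inter, Finset.card_eq_sum_ones]
      _ = ∑ x : P, ∑ B ∈ 𝓑, (if x ∈ B then 1 else 0) := Finset.sum_comm
      _ = ∑ x : P, (𝓑.filter (fun B => x ∈ B)).card :=
          Finset.sum_congr rfl fun x _ => (Finset.card_filter _ _).symm
  have h1 : ∑ B ∈ 𝓑, B.card = 𝓑.card * k := by
    rw [Finset.sum_congr rfl hk, Finset.sum_const, smul_eq_mul]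
  have h2 : ∑ x : P, (𝓑.filter (fun B => x ∈ B)).card = Fintype.card P * r := by
    rw [Finset.sum_congr rfl fun x _ => hr x, Finset.sum_const, smul_eq_mul,
      Finset.card_univ]
  rw [← h1, key, h2]

private lemma pair_count_aux (k r lam : ℕ) (𝓑 : Finset (Finset P))
    (hk : ∀ B ∈ 𝓑, B.card = k)
    (hlam : ∀ x y : P, x ≠ y → (𝓑.filter (fun B => x ∈ B ∧ y ∈ B)).card = lam)
    (hr : ∀ x : P, (𝓑.filter (fun B => x ∈ B)).card = r) (x : P) :
    r * (k - 1) = lam * (Fintype.card P - 1) := by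
  classical
  have key : ∑ B ∈ 𝓑.filter (fun B => x ∈ B), (B.card - 1)
      = ∑ y ∈ Finset.univ.erase x, (𝓑.filter (fun B => x ∈ B ∧ y ∈ B)).card := by
    calc ∑ B ∈ 𝓑.filter (fun B => x ∈ B), (B.card - 1)
        = ∑ B ∈ 𝓑.filter (fun B => x ∈ B), ∑ y ∈ Finset.univ.erase x,
            (if y ∈ B then 1 else 0) := by
          refine Finset.sum_congr rfl fun B hB => ?_
          have hxB : x ∈ B := (Finset.mem_filter.mp hB).2
          have herase : (Finset.univ.erase x).filter (fun y => y ∈ B) = B.erase x := by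
            ext y
            simp [Finset.mem_erase, and_comm, and_assoc]
          rw [← Finset.card_filter, herase, Finset.card_erase_of_mem hxB]
      _ = ∑ y ∈ Finset.univ.erase x, ∑ B ∈ 𝓑.filter (fun B => x ∈ B),
            (if y ∈ B then 1 else 0) := Finset.sum_comm
      _ = ∑ y ∈ Finset.univ.erase x, (𝓑.filter (fun B => x ∈ B ∧ y ∈ B)).card := by
          refine Finset.sum_congr rfl fun y _ => ?_
          rw [← Finset.card_filter, Finset.filter_filter]
  have h1 : ∑ B ∈ 𝓑.filter (fun B => x ∈ B), (B.card - 1) = r * (k - 1) := by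
    have : ∀ B ∈ 𝓑.filter (fun B => x ∈ B), B.card - 1 = k - 1 := by
      intro B hB
      rw [hk B (Finset.mem_filter.mp hB).1]
    rw [Finset.sum_congr rfl this, Finset.sum_const, smul_eq_mul, hr]
  have h2 : ∑ y ∈ Finset.univ.erase x, (𝓑.filter (fun B => x ∈ B ∧ y ∈ B)).card
      = (Fintype.card P - 1) * lam := by
    have : ∀ y ∈ Finset.univ.erase x, (𝓑.filter (fun B => x ∈ B ∧ y ∈ B)).card = lam := by
      intro y hy
      exact hlam x y (Ne.symm (Finset.mem_erase.mp hy).1)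
    rw [Finset.sum_congr rfl this, Finset.sum_const, smul_eq_mul,
      Finset.card_erase_of_mem (Finset.mem_univ x), Finset.card_univ]
  rw [← h1, key, h2, mul_comm]

open Matrix in
private lemma fisher_aux (r lam : ℕ) (𝓑 : Finset (Finset P))
    (hlam : ∀ x y : P, x ≠ y → (𝓑.filter (fun B => x ∈ B ∧ y ∈ B)).card = lam)
    (hr : ∀ x : P, (𝓑.filter (fun B => x ∈ B)).card = r)
    (hrl : lam < r) :
    Fintype.card P ≤ 𝓑.card := by
  classical
  set A : Matrix P {B // B ∈ 𝓑} ℝ :=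
    Matrix.of (fun x (B : {B // B ∈ 𝓑}) => if x ∈ B.1 then (1 : ℝ) else 0) with hA
  set w : Matrix P Unit ℝ := Matrix.of (fun _ _ => Real.sqrt lam) with hw
  have hcount : ∀ x y : P,
      (A * Aᵀ) x y = ((𝓑.filter (fun B => x ∈ B ∧ y ∈ B)).card : ℝ) := by
    intro x y
    rw [Matrix.mul_apply]
    have : ∀ B : {B // B ∈ 𝓑},
        A x B * Aᵀ B y = (if x ∈ B.1 ∧ y ∈ B.1 then (1 : ℝ) else 0) := by
      intro B
      by_cases h1 : x ∈ B.1 <;> by_cases h2 : y ∈ B.1 <;>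
        simp [hA, Matrix.transpose_apply, h1, h2]
    rw [Finset.sum_congr rfl fun B _ => this B]
    rw [Finset.sum_coe_sort 𝓑 (fun B => if x ∈ B ∧ y ∈ B then (1 : ℝ) else 0)]
    rw [Finset.sum_boole]
  have hM : A * Aᵀ = Matrix.diagonal (fun _ : P => (r : ℝ) - lam) + w * wᴴ := by
    ext x y
    have hwe : (w * wᴴ) x y = (lam : ℝ) := by
      simp [hw, Matrix.mul_apply, Matrix.conjTranspose_apply,
        Real.mul_self_sqrt (Nat.cast_nonneg lam)]
    by_cases hxy : x = y
    · subst hxy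
      have hfe : 𝓑.filter (fun B => x ∈ B ∧ x ∈ B) = 𝓑.filter (fun B => x ∈ B) := by
        simp
      rw [hcount, Matrix.add_apply, Matrix.diagonal_apply_eq, hwe, hfe, hr]
      ring
    · rw [hcount, Matrix.add_apply, Matrix.diagonal_apply_ne _ hxy, hwe,
        hlam x y hxy, zero_add]
  have hdiag : Matrix.PosDef (Matrix.diagonal (fun _ : P => (r : ℝ) - lam)) := by
    refine Matrix.PosDef.diagonal fun _ => ?_
    have : (lam : ℝ) < r := by exact_mod_cast hrl
    linarith
  have hPD : (A * Aᵀ).PosDef := by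
    rw [hM]
    exact hdiag.add_posSemidef (Matrix.posSemidef_self_mul_conjTranspose w)
  have hrank : (A * Aᵀ).rank = Fintype.card P := Matrix.rank_of_isUnit _ hPD.isUnit
  calc Fintype.card P = (A * Aᵀ).rank := hrank.symm
    _ ≤ A.rank := Matrix.rank_mul_le_left A Aᵀ
    _ ≤ Fintype.card {B // B ∈ 𝓑} := Matrix.rank_le_card_width A
    _ = 𝓑.card := Fintype.card_coe 𝓑

end aux

/-- If 𝒟 is a non-trivial 2-(v,k,λ) design (2 < k < v−1) with gcd(r,λ) = 1 and
G is a finite flag-transitive automorphism group of 𝒟, then |G| < |G_α|³ for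
every point α. -/
theorem stmt_11 {P : Type*} [Fintype P] [DecidableEq P]
    (v r k lam : ℕ) (𝓑 : Finset (Finset P))
    (hv : Fintype.card P = v)
    (hk : ∀ B ∈ 𝓑, B.card = k)
    (hk2 : 2 < k) (hkv : k < v - 1)
    (hlam1 : 1 ≤ lam)
    (hlam : ∀ x y : P, x ≠ y → (𝓑.filter (fun B => x ∈ B ∧ y ∈ B)).card = lam)
    (hr : ∀ x : P, (𝓑.filter (fun B => x ∈ B)).card = r)
    (hcop : Nat.gcd r lam = 1)
    {G : Type*} [Group G] [Finite G] [MulAction G P]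
    (hG : ∀ (g : G), ∀ B ∈ 𝓑, g • B ∈ 𝓑)
    (hft : ∀ B₁ ∈ 𝓑, ∀ B₂ ∈ 𝓑, ∀ α₁ ∈ B₁, ∀ α₂ ∈ B₂,
      ∃ g : G, g • α₁ = α₂ ∧ g • B₁ = B₂)
    (α : P) :
    Nat.card G < Nat.card (MulAction.stabilizer G α) ^ 3 := by
  classical
  have hv5 : 5 ≤ v := by omega
  -- basic identities
  have hid : r * (k - 1) = lam * (v - 1) := by
    rw [← hv]; exact pair_count_aux k r lam 𝓑 hk hlam hr α
  -- lam < r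
  have hrl : lam < r := by
    obtain ⟨k', rfl⟩ : ∃ k', k = k' + 1 := ⟨k - 1, by omega⟩
    obtain ⟨v', rfl⟩ : ∃ v', v = v' + 1 := ⟨v - 1, by omega⟩
    simp only [Nat.add_sub_cancel] at hid
    have hk'v' : k' < v' := by omega
    by_contra h
    push_neg at h
    have h1 : r * k' ≤ lam * k' := Nat.mul_le_mul_right _ h
    have h2 : lam * k' < lam * v' := mul_lt_mul_of_pos_left hk'v' (by omega)
    omega
  -- Fisher : v ≤ b
  have hfish : v ≤ 𝓑.card := by
    rw [← hv]; exact fisher_aux r lam 𝓑 hlam hr hrl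
  have hflag : 𝓑.card * k = v * r := by
    rw [← hv]; exact flag_count_aux k r 𝓑 hk hr
  -- k ≤ r
  have hkr : k ≤ r := by
    have h1 : v * k ≤ 𝓑.card * k := Nat.mul_le_mul_right _ hfish
    rw [hflag] at h1
    exact Nat.le_of_mul_le_mul_left h1 (by omega)
  -- lam * v < r * r
  have hlv : lam * v < r * r := by
    obtain ⟨k', rfl⟩ : ∃ k', k = k' + 1 := ⟨k - 1, by omega⟩
    obtain ⟨v', rfl⟩ : ∃ v', v = v' + 1 := ⟨v - 1, by omega⟩
    simp only [Nat.add_sub_cancel] at hid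
    have h1 : r * (k' + 1) ≤ r * r := Nat.mul_le_mul_left _ hkr
    nlinarith
  -- a block through α
  have hBex : ∀ x : P, ∃ B ∈ 𝓑, x ∈ B := by
    intro x
    have : (𝓑.filter (fun B => x ∈ B)).card ≠ 0 := by rw [hr]; omega
    obtain ⟨B, hB⟩ := Finset.card_ne_zero.mp this
    exact ⟨B, (Finset.mem_filter.mp hB).1, (Finset.mem_filter.mp hB).2⟩
  obtain ⟨B₀, hB₀𝓑, hαB₀⟩ := hBex α
  -- point transitivity
  have htrans : MulAction.IsPretransitive G P := by
    constructor
    intro x y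
    obtain ⟨Bx, hBx, hxBx⟩ := hBex x
    obtain ⟨By, hBy, hyBy⟩ := hBex y
    obtain ⟨g, hg, -⟩ := hft Bx hBx By hBy x hxBx y hyBy
    exact ⟨g, hg⟩
  -- |G| = v * |G_α|
  have hindex : (MulAction.stabilizer G α).index = v := by
    rw [MulAction.index_stabilizer_of_transitive, Nat.card_eq_fintype_card, hv]
  have hGcard : v * Nat.card (MulAction.stabilizer G α) = Nat.card G := by
    rw [← hindex]
    exact Subgroup.index_mul_card _
  -- r ≤ |G_α|
  haveI : Fintype (MulAction.stabilizer G α) := Fintype.ofFinite _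
  have hrs : r ≤ Nat.card (MulAction.stabilizer G α) := by
    have himg : 𝓑.filter (fun B => α ∈ B) ⊆
        Finset.image (fun g : MulAction.stabilizer G α => (g : G) • B₀) Finset.univ := by
      intro B hB
      rw [Finset.mem_filter] at hB
      obtain ⟨g, hg1, hg2⟩ := hft B₀ hB₀𝓑 B hB.1 α hαB₀ α hB.2
      exact Finset.mem_image.mpr ⟨⟨g, hg1⟩, Finset.mem_univ _, hg2⟩
    calc r = (𝓑.filter (fun B => α ∈ B)).card := (hr α).symm
      _ ≤ (Finset.image (fun g : MulAction.stabilizer G α => (g : G) • B₀)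
            Finset.univ).card := Finset.card_le_card himg
      _ ≤ Finset.univ.card := Finset.card_image_le
      _ = Nat.card (MulAction.stabilizer G α) := by
          rw [Finset.card_univ, Nat.card_eq_fintype_card]
  set s := Nat.card (MulAction.stabilizer G α) with hs
  have hs0 : 0 < s := by omega
  calc Nat.card G = v * s := hGcard.symm
    _ ≤ (lam * v) * s := Nat.mul_le_mul_right _ (Nat.le_mul_of_pos_left _ (by omega))
    _ < (r * r) * s := mul_lt_mul_of_pos_right hlv hs0
    _ ≤ (s * s) * s := Nat.mul_le_mul_right _ (Nat.mul_le_mul hrs hrs)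
    _ = s ^ 3 := by ring
end

section
/- Let 𝒟 be a non-trivial 2-(v,k,λ) design (2 < k < v−1) in which every point lies in exactly r blocks, with gcd(r,λ) = 1, let G be a finite flag-transitive automorphism group of 𝒟, and suppose a prime p divides v. Then |G| < |G_α| · (|G_α|_{p'})², where |G_α|_{p'} denotes the largest divisor of |G_α| coprime to p (the p′-part of |G_α|, in Mathlib Nat.ordCompl p |G_α|). -/
open Pointwise

/-- If 𝒟 is a non-trivial 2-(v,k,λ) design (2 < k < v−1) with gcd(r,λ) = 1,
G is a finite flag-transitive automorphism group of 𝒟, and a prime p divides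
v, then |G| < |G_α| · (|G_α|_{p'})², where |G_α|_{p'} is the p′-part of |G_α|. -/
theorem stmt_12 {P : Type*} [Fintype P] [DecidableEq P]
    (v r k lam : ℕ) (𝓑 : Finset (Finset P))
    (hv : Fintype.card P = v)
    (hk : ∀ B ∈ 𝓑, B.card = k)
    (hk2 : 2 < k) (hkv : k < v - 1)
    (hlam1 : 1 ≤ lam)
    (hlam : ∀ x y : P, x ≠ y → (𝓑.filter (fun B => x ∈ B ∧ y ∈ B)).card = lam)
    (hr : ∀ x : P, (𝓑.filter (fun B => x ∈ B)).card = r)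
    (hcop : Nat.gcd r lam = 1)
    {G : Type*} [Group G] [Finite G] [MulAction G P]
    (hG : ∀ (g : G), ∀ B ∈ 𝓑, g • B ∈ 𝓑)
    (hft : ∀ B₁ ∈ 𝓑, ∀ B₂ ∈ 𝓑, ∀ α₁ ∈ B₁, ∀ α₂ ∈ B₂,
      ∃ g : G, g • α₁ = α₂ ∧ g • B₁ = B₂)
    (p : ℕ) (hp : p.Prime) (hpv : p ∣ v)
    (α : P) :
    Nat.card G < Nat.card (MulAction.stabilizer G α) *
      (ordCompl[p] (Nat.card (MulAction.stabilizer G α))) ^ 2 := by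
  classical
  have hv5 : 5 ≤ v := by omega
  -- Key counting identity: r * (k - 1) = (v - 1) * lam
  have key : ∀ x : P, r * (k - 1) = (v - 1) * lam := by
    intro x
    have hF : ∀ B ∈ 𝓑.filter (fun B => x ∈ B), (B.erase x).card = k - 1 := by
      intro B hB
      rw [Finset.mem_filter] at hB
      rw [Finset.card_erase_of_mem hB.2, hk B hB.1]
    calc r * (k - 1)
        = ∑ B ∈ 𝓑.filter (fun B => x ∈ B), (B.erase x).card := by
          rw [Finset.sum_congr rfl hF, Finset.sum_const, smul_eq_mul, hr x]
      _ = ∑ B ∈ 𝓑.filter (fun B => x ∈ B), ∑ y ∈ Finset.univ.erase x,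
            (if y ∈ B then 1 else 0) := by
          refine Finset.sum_congr rfl fun B _ => ?_
          rw [show B.erase x = (Finset.univ.erase x).filter (fun y => y ∈ B) by
            ext y; simp [Finset.mem_erase, and_comm], Finset.card_filter]
      _ = ∑ y ∈ Finset.univ.erase x, ∑ B ∈ 𝓑.filter (fun B => x ∈ B),
            (if y ∈ B then 1 else 0) := Finset.sum_comm
      _ = ∑ y ∈ Finset.univ.erase x, lam := by
          refine Finset.sum_congr rfl fun y hy => ?_
          rw [Finset.mem_erase] at hy
          rw [← Finset.card_filter, Finset.filter_filter]
          exact hlam x y (Ne.symm hy.1)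
      _ = (v - 1) * lam := by
          rw [Finset.sum_const, smul_eq_mul, Finset.card_erase_of_mem (Finset.mem_univ x),
            Finset.card_univ, hv]
  -- Second counting identity: b * k = v * r
  have key2 : 𝓑.card * k = v * r := by
    calc 𝓑.card * k
        = ∑ B ∈ 𝓑, B.card := by
          rw [Finset.sum_congr rfl hk, Finset.sum_const, smul_eq_mul]
      _ = ∑ B ∈ 𝓑, ∑ y : P, (if y ∈ B then 1 else 0) := by
          refine Finset.sum_congr rfl fun B _ => ?_
          rw [← Finset.card_filter]
          congr 1
          ext y
          simp
      _ = ∑ y : P, ∑ B ∈ 𝓑, (if y ∈ B then 1 else 0) := Finset.sum_comm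
      _ = ∑ _y : P, r := by
          refine Finset.sum_congr rfl fun y _ => ?_
          rw [← Finset.card_filter, hr y]
      _ = v * r := by rw [Finset.sum_const, smul_eq_mul, Finset.card_univ, hv]
  have hrlam : lam < r := by
    by_contra hcon
    push_neg at hcon
    have h1 : r * (k - 1) ≤ lam * (k - 1) := Nat.mul_le_mul_right _ hcon
    have h2 : lam * (k - 1) < lam * (v - 1) := by
      exact Nat.mul_lt_mul_of_pos_left (by omega) (by omega)
    rw [key α, mul_comm] at h1
    omega
  -- Fisher's inequality: v ≤ b, via the incidence matrix over ℝ
  have hvb : v ≤ 𝓑.card := by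
    set A : Matrix P {B : Finset P // B ∈ 𝓑} ℝ :=
      fun x B => if x ∈ (B : Finset P) then 1 else 0 with hA
    set C : Matrix Unit P ℝ := fun _ _ => Real.sqrt lam with hC
    have hCC : ∀ x y : P, (C.conjTranspose * C) x y = (lam : ℝ) := by
      intro x y
      rw [Matrix.mul_apply]; simp only [Matrix.conjTranspose_apply, star_trivial,
        Finset.univ_unique, Finset.sum_singleton]; simp only [hC]
      exact Real.mul_self_sqrt (by positivity)
    have hM : A * A.conjTranspose = Matrix.diagonal (fun _ => ((r : ℝ) - lam)) + C.conjTranspose * C := by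
      ext x y
      have hsum : (A * A.conjTranspose) x y
          = ((𝓑.filter fun B => x ∈ B ∧ y ∈ B).card : ℝ) := by
        rw [Matrix.mul_apply]; simp only [Matrix.conjTranspose_apply, star_trivial]; simp only [hA]
        rw [Finset.sum_coe_sort 𝓑 (fun B => ((if x ∈ B then (1:ℝ) else 0) *
          (if y ∈ B then (1:ℝ) else 0))), ← Finset.sum_boole]
        refine Finset.sum_congr rfl fun B _ => ?_
        by_cases hx : x ∈ B <;> by_cases hy : y ∈ B <;> simp [hx, hy]
      rw [Matrix.add_apply, hCC x y, hsum]
      by_cases hxy : x = y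
      · subst hxy
        have : (𝓑.filter fun B => x ∈ B ∧ x ∈ B) = 𝓑.filter fun B => x ∈ B := by
          simp
        rw [this, hr x, Matrix.diagonal_apply_eq]
        ring
      · rw [hlam x y hxy, Matrix.diagonal_apply_ne _ hxy]
        ring
    have hpos : (A * A.conjTranspose).PosDef := by
      rw [hM]
      refine Matrix.PosDef.add_posSemidef ?_ (Matrix.posSemidef_conjTranspose_mul_self C)
      refine Matrix.PosDef.diagonal fun _ => ?_
      have : (lam : ℝ) < r := by exact_mod_cast hrlam
      linarith
    have h1 : (A * A.conjTranspose).rank = Fintype.card P := Matrix.rank_of_isUnit _ hpos.isUnit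
    have h2 : (A * A.conjTranspose).rank ≤ A.rank := Matrix.rank_mul_le_left _ _
    have h3 : A.rank ≤ Fintype.card {B : Finset P // B ∈ 𝓑} := Matrix.rank_le_card_width _
    have h4 : Fintype.card {B : Finset P // B ∈ 𝓑} = 𝓑.card := Fintype.card_coe _
    omega
  -- r ≥ k
  have hkr : k ≤ r := by
    have h1 : v * k ≤ 𝓑.card * k := Nat.mul_le_mul_right _ hvb
    rw [key2] at h1
    exact Nat.le_of_mul_le_mul_left h1 (by omega)
  -- r divides v - 1
  have hrv1 : r ∣ v - 1 := by
    have h1 : r ∣ (v - 1) * lam := ⟨k - 1, (key α).symm⟩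
    exact (Nat.Coprime.dvd_of_dvd_mul_right hcop h1)
  -- p does not divide r
  have hpr : ¬ p ∣ r := by
    intro hdvd
    have h1 : p ∣ v - 1 := hdvd.trans hrv1
    have h2 : p ∣ v - (v - 1) := Nat.dvd_sub hpv h1
    rw [show v - (v - 1) = 1 by omega] at h2
    exact hp.one_lt.ne' (Nat.dvd_one.mp h2)
  -- a block through α
  have hrpos : 0 < r := by omega
  obtain ⟨B₀, hB₀⟩ : ∃ B, B ∈ 𝓑.filter (fun B => α ∈ B) := by
    apply Finset.card_pos.mp
    rw [hr α]; exact hrpos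
  rw [Finset.mem_filter] at hB₀
  set H := MulAction.stabilizer G α with hH
  -- the orbit of B₀ under H is the set of blocks through α
  have horb : MulAction.orbit H B₀ = ↑(𝓑.filter fun B => α ∈ B) := by
    ext D
    constructor
    · rintro ⟨g, rfl⟩
      have hg : (g : G) • α = α := g.2
      simp only [Finset.coe_filter, Set.mem_setOf_eq]
      refine ⟨hG g B₀ hB₀.1, ?_⟩
      have : (g : G) • α ∈ (g : G) • B₀ := Finset.smul_mem_smul_finset hB₀.2
      rwa [hg] at this
    · intro hD
      simp only [Finset.coe_filter, Set.mem_setOf_eq] at hD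
      obtain ⟨g, hgα, hgB⟩ := hft B₀ hB₀.1 D hD.1 α hB₀.2 α hD.2
      exact ⟨⟨g, hgα⟩, hgB⟩
  have horbcard : Nat.card (MulAction.orbit H B₀) = r := by
    rw [horb, Nat.card_coe_set_eq, Set.ncard_coe_finset, hr α]
  -- orbit-stabilizer for H acting on blocks: r divides |H|
  have hdvd : r ∣ Nat.card H := by
    have h1 := Nat.card_congr (MulAction.orbitProdStabilizerEquivGroup H B₀)
    rw [Nat.card_prod, horbcard] at h1
    exact ⟨_, h1.symm⟩
  have hHpos : 0 < Nat.card H := Nat.card_pos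
  set N := ordCompl[p] (Nat.card H) with hN
  have hNpos : 0 < N := Nat.ordCompl_pos p hHpos.ne'
  -- r divides N
  have hrN : r ∣ N := by
    have h1 : r ∣ ordProj[p] (Nat.card H) * N := by
      rw [hN, Nat.ordProj_mul_ordCompl_eq_self]
      exact hdvd
    have h2 : (Nat.Coprime r (p ^ (Nat.card H).factorization p)) :=
      Nat.Coprime.pow_right _ (((hp.coprime_iff_not_dvd).mpr hpr).symm)
    exact h2.dvd_of_dvd_mul_left h1
  have hrleN : r ≤ N := Nat.le_of_dvd hNpos hrN
  -- v < N ^ 2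
  have hvlt : v < N ^ 2 := by
    have h1 : v - 1 ≤ (v - 1) * lam := Nat.le_mul_of_pos_right _ (by omega)
    rw [← key α] at h1
    have h2 : r * (k - 1) ≤ r * (r - 1) := Nat.mul_le_mul_left _ (by omega)
    have h3 : r * (r - 1) + r = r * r := by
      obtain ⟨m, rfl⟩ : ∃ m, r = m + 1 := ⟨r - 1, by omega⟩
      simp only [Nat.add_sub_cancel]
      ring
    have h4 : v < r * r := by omega
    calc v < r * r := h4
      _ ≤ N * N := Nat.mul_le_mul hrleN hrleN
      _ = N ^ 2 := (sq N).symm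
  -- orbit-stabilizer for G acting on points
  have horbG : Nat.card (MulAction.orbit G α) ≤ v := by
    rw [Nat.card_coe_set_eq]
    calc (MulAction.orbit G α).ncard ≤ (Set.univ : Set P).ncard :=
          Set.ncard_le_ncard (Set.subset_univ _) Set.finite_univ
      _ = Nat.card P := Set.ncard_univ P
      _ = v := by rw [Nat.card_eq_fintype_card, hv]
  have hos := Nat.card_congr (MulAction.orbitProdStabilizerEquivGroup G α)
  rw [Nat.card_prod] at hos
  calc Nat.card G = Nat.card (MulAction.orbit G α) * Nat.card H := hos.symm
    _ ≤ v * Nat.card H := Nat.mul_le_mul_right _ horbG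
    _ < N ^ 2 * Nat.card H := (Nat.mul_lt_mul_right hHpos).mpr hvlt
    _ = Nat.card H * N ^ 2 := Nat.mul_comm _ _
end

section
/- Let Fˣ act on the additive group F × F by k · (β,γ) = (k^(m+1)·β, k^(m+2)·γ). Then the only additive subgroups A of F × F that are invariant under this action and have cardinality q are F × {0} and {0} × F. (This is the key structural step behind Lemma 2.19, which shows that the Ree group ²G₂(q) has exactly two conjugacy classes of subgroups of order q(q−1).) -/
/-!
Since `m` is odd, `-1 ∈ Fˣ` acts by `(β, γ) ↦ (β, -γ)`; as `2` is invertible in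
characteristic 3, `A` splits as `S₁ × S₂` with `Sᵢ` its coordinate projections. Each `Sᵢ` is
an additive subgroup of `F` stable under multiplication by the `(m+1)`-th, resp. `(m+2)`-th,
powers of units. From `m² = 3q` one gets `gcd(m+2, q-1) = 1` and `gcd(m+1, q-1) ∣ 2`, so these
powers include all squares of `Fˣ`; as `q ≡ 3 mod 4`, `-1` is a nonsquare, so every nonzero `u`
has `u` or `-u` among them, and each `Sᵢ` is `0` or `F`. The count `|A| = q` leaves only
`F × 0` and `0 × F`.
-/

theorem exists_pow_eq_pow_of_gcd_natCard_dvd {G : Type*} [Group G] {e d : ℕ}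
    (h : Nat.gcd e (Nat.card G) ∣ d) (g : G) : ∃ x : G, x ^ e = g ^ d := by
  obtain ⟨c, rfl⟩ := h
  refine ⟨g ^ (Nat.gcdA e (Nat.card G) * c), ?_⟩
  have hord : g ^ ((Nat.card G : ℤ) * (Nat.gcdB e (Nat.card G) * c)) = 1 := by
    rw [zpow_mul, zpow_natCast, pow_card_eq_one', one_zpow]
  calc (g ^ (Nat.gcdA e (Nat.card G) * c)) ^ e
      = g ^ ((e : ℤ) * (Nat.gcdA e (Nat.card G) * c)) *
          g ^ ((Nat.card G : ℤ) * (Nat.gcdB e (Nat.card G) * c)) := by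
        rw [hord, mul_one, ← zpow_natCast, ← zpow_mul, mul_comm]
    _ = g ^ (Nat.gcd e (Nat.card G) * c) := by
        rw [← zpow_add, ← zpow_natCast, Nat.cast_mul, Nat.gcd_eq_gcd_ab]
        ring_nf

theorem Nat.gcd_add_one_dvd_two_of_sq_eq {m N : ℕ} (h : m ^ 2 = 3 * (N + 1)) :
    Nat.gcd (m + 1) N ∣ 2 := by
  have hm : (Nat.gcd (m + 1) N : ℤ) ∣ m + 1 := by
    exact_mod_cast Nat.gcd_dvd_left (m + 1) N
  have hN : (Nat.gcd (m + 1) N : ℤ) ∣ N := Int.natCast_dvd_natCast.2 (Nat.gcd_dvd_right _ _)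
  have key : ((m : ℤ) - 1) * (m + 1) - 3 * N = 2 := by
    linear_combination (by exact_mod_cast h : (m : ℤ) ^ 2 = 3 * (N + 1))
  have h2 : (Nat.gcd (m + 1) N : ℤ) ∣ 2 := key ▸ (hm.mul_left _).sub (hN.mul_left 3)
  exact_mod_cast h2

theorem Nat.coprime_add_two_of_sq_eq {m N : ℕ} (h : m ^ 2 = 3 * (N + 1)) :
    Nat.Coprime (m + 2) N := by
  rw [← Nat.isCoprime_iff_coprime]
  refine ⟨2 - m, 3, ?_⟩
  push_cast
  linear_combination -(by exact_mod_cast h : (m : ℤ) ^ 2 = 3 * (N + 1))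

theorem FiniteField.isSquare_or_isSquare_neg {F : Type*} [Field F] [Fintype F]
    (hF : ¬IsSquare (-1 : F)) {u : F} (hu : u ≠ 0) : IsSquare u ∨ IsSquare (-u) := by
  classical
  refine or_iff_not_imp_left.2 fun h => (quadraticChar_one_iff_isSquare (neg_ne_zero.2 hu)).1 ?_
  rw [neg_eq_neg_one_mul, map_mul, quadraticChar_neg_one_iff_not_isSquare.2 hF,
    quadraticChar_neg_one_iff_not_isSquare.2 h]
  norm_num

theorem FiniteField.exists_pow_eq_or_exists_pow_eq_neg {F : Type*} [Field F] [Fintype F]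
    (hF : ¬IsSquare (-1 : F)) {e : ℕ} (he : Nat.gcd e (Nat.card Fˣ) ∣ 2) {u : F}
    (hu : u ≠ 0) : (∃ k : Fˣ, (k : F) ^ e = u) ∨ ∃ k : Fˣ, (k : F) ^ e = -u := by
  have of_isSquare : ∀ v : F, v ≠ 0 → IsSquare v → ∃ k : Fˣ, (k : F) ^ e = v := by
    rintro v hv ⟨r, rfl⟩
    obtain ⟨k, hk⟩ :=
      exists_pow_eq_pow_of_gcd_natCard_dvd he (Units.mk0 r (left_ne_zero_of_mul hv))
    exact ⟨k, by rw [← Units.val_pow_eq_pow_val, hk, Units.val_pow_eq_pow_val, sq]; rfl⟩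
  exact (isSquare_or_isSquare_neg hF hu).imp (of_isSquare _ hu) (of_isSquare _ (neg_ne_zero.2 hu))

theorem AddSubgroup.eq_prod_map_of_neg_snd_mem {M N : Type*} [AddCommGroup M] [AddCommGroup N]
    (hN : ∀ y : N, 3 • y = 0) {A : AddSubgroup (M × N)} (hA : ∀ x ∈ A, (x.1, -x.2) ∈ A) :
    A = (A.map (AddMonoidHom.fst M N)).prod (A.map (AddMonoidHom.snd M N)) := by
  have snd_mem : ∀ x ∈ A, ((0 : M), x.2) ∈ A := by
    intro x hx
    have : ((0 : M), x.2) = -(x - (x.1, -x.2)) := by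
      ext
      · simp
      · simp only [Prod.snd_neg, Prod.snd_sub]
        rw [sub_neg_eq_add, eq_neg_iff_add_eq_zero, ← hN x.2]
        abel
    exact this ▸ A.neg_mem (A.sub_mem hx (hA x hx))
  have fst_mem : ∀ x ∈ A, (x.1, (0 : N)) ∈ A := fun x hx => by
    convert A.sub_mem hx (snd_mem x hx) using 1
    ext <;> simp
  refine le_antisymm (fun x hx => ⟨⟨x, hx, rfl⟩, ⟨x, hx, rfl⟩⟩) ?_
  rintro ⟨-, -⟩ ⟨⟨x, hx, rfl⟩, ⟨y, hy, rfl⟩⟩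
  simpa using A.add_mem (fst_mem x hx) (snd_mem y hy)

theorem AddSubgroup.eq_bot_or_eq_top_of_mul_mem {K : Type*} [DivisionRing K]
    (S : AddSubgroup K) {T : Set K} (hT : ∀ u ≠ 0, u ∈ T ∨ -u ∈ T)
    (hS : ∀ t ∈ T, ∀ s ∈ S, t * s ∈ S) :
    S = ⊥ ∨ S = ⊤ := by
  refine S.bot_or_exists_ne_zero.imp_right fun ⟨a, ha, ha0⟩ => ?_
  refine (eq_top_iff' S).2 fun c => ?_
  rcases eq_or_ne c 0 with rfl | hc
  · exact S.zero_mem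
  rcases hT (c * a⁻¹) (by simp [hc, ha0]) with h | h
  · simpa [ha0] using hS _ h a ha
  · simpa [ha0] using S.neg_mem (hS _ h a ha)

theorem AddSubgroup.eq_bot_or_eq_top_of_units_pow_mul_mem {F : Type*} [Field F] [Fintype F]
    (hF : ¬IsSquare (-1 : F)) {e : ℕ} (he : Nat.gcd e (Nat.card Fˣ) ∣ 2) (S : AddSubgroup F)
    (hS : ∀ k : Fˣ, ∀ s ∈ S, (k : F) ^ e * s ∈ S) : S = ⊥ ∨ S = ⊤ :=
  S.eq_bot_or_eq_top_of_mul_mem (T := Set.range fun k : Fˣ => (k : F) ^ e)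
    (fun _ hu => FiniteField.exists_pow_eq_or_exists_pow_eq_neg hF he hu)
    (by rintro _ ⟨k, rfl⟩; exact hS k)

theorem AddSubgroup.prod_eq_top_prod_bot_or_eq_bot_prod_top {G : Type*} [AddGroup G] [Finite G]
    [Nontrivial G] {S T : AddSubgroup G} (hS : S = ⊥ ∨ S = ⊤) (hT : T = ⊥ ∨ T = ⊤)
    (hcard : Nat.card (S.prod T) = Nat.card G) :
    S.prod T = AddSubgroup.prod ⊤ ⊥ ∨ S.prod T = AddSubgroup.prod ⊥ ⊤ := by
  have hG : 1 < Nat.card G := Finite.one_lt_card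
  rcases hS with rfl | rfl <;> rcases hT with rfl | rfl
  · rw [AddSubgroup.bot_prod_bot, AddSubgroup.card_bot] at hcard
    omega
  · exact Or.inr rfl
  · exact Or.inl rfl
  · rw [AddSubgroup.top_prod_top, AddSubgroup.card_top, Nat.card_prod] at hcard
    nlinarith

/-- Let q = 3^(2n+1), m = 3^(n+1) and let F be a field with q elements. If an
additive subgroup A of F × F of cardinality q is invariant under the action of
Fˣ given by k · (β,γ) = (k^(m+1)·β, k^(m+2)·γ), then A = F × {0} or
A = {0} × F. -/
theorem stmt_13 (n : ℕ) {F : Type*} [Field F] [Fintype F]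
    (hF : Fintype.card F = 3 ^ (2 * n + 1))
    (A : AddSubgroup (F × F))
    (hinv : ∀ (κ : Fˣ), ∀ x ∈ A,
      ((κ : F) ^ (3 ^ (n + 1) + 1) * x.1, (κ : F) ^ (3 ^ (n + 1) + 2) * x.2) ∈ A)
    (hcard : Nat.card A = 3 ^ (2 * n + 1)) :
    A = AddSubgroup.prod ⊤ ⊥ ∨ A = AddSubgroup.prod ⊥ ⊤ := by
  set m := 3 ^ (n + 1)
  have hm : m ^ 2 = 3 * (Nat.card Fˣ + 1) := by
    rw [← Nat.card_eq_card_units_add_one, Nat.card_eq_fintype_card, hF]; ring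
  have : CharP F 3 := charP_of_card_eq_prime_pow hF
  have hneg1 : ¬IsSquare (-1 : F) := by
    rw [FiniteField.isSquare_neg_one_iff, not_not, hF, pow_succ, pow_mul, Nat.mul_mod, Nat.pow_mod]
    norm_num
  have hm_odd : Odd m := Odd.pow (by decide)
  have hA : A = (A.map (AddMonoidHom.fst F F)).prod (A.map (AddMonoidHom.snd F F)) :=
    AddSubgroup.eq_prod_map_of_neg_snd_mem (fun y => by simp [CharP.ofNat_eq_zero F 3])
      fun x hx => by
        simpa [hm_odd.add_one.neg_one_pow, (hm_odd.add_even even_two).neg_one_pow] using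
          hinv (-1) x hx
  have hS₁ := (A.map (AddMonoidHom.fst F F)).eq_bot_or_eq_top_of_units_pow_mul_mem hneg1
    (Nat.gcd_add_one_dvd_two_of_sq_eq hm)
    (by rintro k _ ⟨x, hx, rfl⟩; exact ⟨_, hinv k x hx, rfl⟩)
  have hS₂ := (A.map (AddMonoidHom.snd F F)).eq_bot_or_eq_top_of_units_pow_mul_mem hneg1
    ((Nat.coprime_add_two_of_sq_eq hm).gcd_eq_one ▸ one_dvd 2)
    (by rintro k _ ⟨x, hx, rfl⟩; exact ⟨_, hinv k x hx, rfl⟩)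
  rw [hA] at hcard ⊢
  exact AddSubgroup.prod_eq_top_prod_bot_or_eq_bot_prod_top hS₁ hS₂
    (by rw [hcard, Nat.card_eq_fintype_card, hF])
end

section
/- Let n be a natural number, q = 3^(2n+1), m = 3^(n+1), and let F be a finite field with q elements. Then the map x ↦ x^(m+2) is a bijection of Fˣ; equivalently, the action of Fˣ on F \ {0} given by k · γ = k^(m+2)·γ is transitive. (This is Lemma 2.16(1): K is transitive on Q₁ \ {1} acting by conjugation.) -/
/-! With `m = 3^(n+1)` and `q = 3^(2n+1)` we have `m² = 3q`, so
`(m + 2)(m - 2) = 3(q - 1) - 1`. Hence `m + 2` is coprime to `q - 1 = |Fˣ|`, and raising to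
the power `m + 2` is a bijection of the finite group `Fˣ`; its surjectivity is the transitivity. -/

theorem Nat.coprime_add_two_sub_one_of_sq_eq_three_mul {m q : ℕ} (hq : 1 ≤ q)
    (h : m ^ 2 = 3 * q) : Nat.Coprime (m + 2) (q - 1) := by
  rw [← Nat.isCoprime_iff_coprime, Nat.cast_sub hq]
  have h' : (m : ℤ) ^ 2 = 3 * q := by exact_mod_cast h
  exact ⟨2 - m, 3, by push_cast; linear_combination -h'⟩

theorem exists_units_pow_mul_eq_of_surjective {F : Type*} [GroupWithZero F] {e : ℕ}
    (he : Function.Surjective (fun x : Fˣ => x ^ e)) {γ δ : F} (hγ : γ ≠ 0) (hδ : δ ≠ 0) :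
    ∃ κ : Fˣ, (κ : F) ^ e * γ = δ := by
  obtain ⟨κ, hκ : κ ^ e = _⟩ := he (Units.mk0 δ hδ / Units.mk0 γ hγ)
  refine ⟨κ, ?_⟩
  rw [← Units.val_pow_eq_pow_val, hκ, Units.val_div_eq_div_val, Units.val_mk0, Units.val_mk0,
    div_mul_cancel₀ δ hγ]

/-- Let q = 3^(2n+1), m = 3^(n+1) and let F be a field with q elements. Then
x ↦ x^(m+2) is a bijection of Fˣ; equivalently, the action of Fˣ on F \ {0}
given by k · γ = k^(m+2)·γ is transitive. -/
theorem stmt_16 (n : ℕ) {F : Type*} [Field F] [Fintype F]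
    (hF : Fintype.card F = 3 ^ (2 * n + 1)) :
    Function.Bijective (fun x : Fˣ => x ^ (3 ^ (n + 1) + 2)) ∧
      ∀ γ δ : F, γ ≠ 0 → δ ≠ 0 →
        ∃ κ : Fˣ, (κ : F) ^ (3 ^ (n + 1) + 2) * γ = δ := by
  have hcard : Nat.card Fˣ = 3 ^ (2 * n + 1) - 1 := by
    rw [Nat.card_units, Nat.card_eq_fintype_card, hF]
  have hcoprime : (Nat.card Fˣ).Coprime (3 ^ (n + 1) + 2) := by
    rw [hcard]
    exact (Nat.coprime_add_two_sub_one_of_sq_eq_three_mul (Nat.one_le_pow _ _ (by norm_num))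
      (by ring)).symm
  have hbij := hcoprime.pow_left_bijective
  exact ⟨hbij, fun γ δ hγ hδ => exists_units_pow_mul_eq_of_surjective hbij.surjective hγ hδ⟩
end

section
/- Let n be a natural number, q = 3^(2n+1), m = 3^(n+1), and let F be a finite field with q elements. Then the action of Fˣ on F \ {0} given by k · β = k^(m+1)·β has exactly two orbits, namely the orbit of 1 and the orbit of −1; these orbits are the set of nonzero squares and the set of nonsquares of F, each of size (q−1)/2. (This is Lemma 2.16(2): K has exactly two orbits on Q₂ \ {1} acting by conjugation.) -/
/-!
With m = 3^(n+1) and q = 3^(2n+1) we have (m+1)(m-1) = m² - 1 = 3(q-1) + 2, so on the cyclic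
group Fˣ of order q-1 the power κ ↦ κ^(m+1) has the same image as squaring: κ^(m+1) is the
square of κ^((m+1)/2), and y² = (y^(m-1))^(m+1). Since q ≡ 3 (mod 4), -1 is a nonsquare, so
negation exchanges the nonzero squares with the nonsquares; hence both orbits have (q-1)/2
elements.
-/

lemma Nat.three_pow_two_mul_add_one_mod_four (n : ℕ) : 3 ^ (2 * n + 1) % 4 = 3 := by
  rw [pow_succ, pow_mul, Nat.mul_mod, Nat.pow_mod]
  norm_num

lemma Nat.three_pow_succ_sq_sub_one_modEq (n : ℕ) :
    (3 ^ (n + 1) + 1) * (3 ^ (n + 1) - 1) ≡ 2 [MOD 3 ^ (2 * n + 1) - 1] := by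
  have hm : 1 ≤ 3 ^ (n + 1) := Nat.one_le_pow _ _ (by norm_num)
  have hq : 1 ≤ 3 ^ (2 * n + 1) := Nat.one_le_pow _ _ (by norm_num)
  rw [Nat.modEq_iff_dvd, Nat.cast_sub hq, Nat.cast_mul, Nat.cast_sub hm]
  exact ⟨-3, by push_cast; ring⟩

namespace FiniteField

variable {F : Type*} [Field F] [Fintype F]

lemma setOf_exists_unit_pow_eq {e f : ℕ} (he : Even e)
    (hef : e * f ≡ 2 [MOD Fintype.card F - 1]) :
    {δ : F | ∃ κ : Fˣ, (κ : F) ^ e = δ} = {x | x ≠ 0 ∧ IsSquare x} := by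
  ext x
  constructor
  · rintro ⟨κ, rfl⟩
    obtain ⟨d, rfl⟩ := he
    exact ⟨pow_ne_zero _ κ.ne_zero, (κ : F) ^ d, pow_add _ _ _⟩
  · rintro ⟨hx, y, rfl⟩
    have hy : y ≠ 0 := by rintro rfl; simp at hx
    set u := Units.mk0 y hy
    have hord : orderOf u ∣ Fintype.card F - 1 := by
      classical
      exact Fintype.card_units F ▸ orderOf_dvd_card
    have hu : (u ^ f) ^ e = u ^ 2 := by
      rw [← pow_mul, mul_comm, pow_eq_pow_iff_modEq]
      exact hef.of_dvd hord
    refine ⟨u ^ f, ?_⟩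
    simpa [u, sq] using congrArg Units.val hu

lemma isSquare_neg_iff_not_isSquare (h : ¬ IsSquare (-1 : F)) {x : F} (hx : x ≠ 0) :
    IsSquare (-x) ↔ ¬ IsSquare x := by
  classical
  rw [← quadraticChar_one_iff_isSquare (neg_ne_zero.mpr hx), neg_eq_neg_one_mul, map_mul,
    quadraticChar_neg_one_iff_not_isSquare.mpr h, ← quadraticChar_neg_one_iff_not_isSquare]
  omega

lemma neg_setOf_isSquare (h : ¬ IsSquare (-1 : F)) :
    -{x : F | x ≠ 0 ∧ IsSquare x} = {x | ¬ IsSquare x} := by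
  ext x
  by_cases hx : x = 0
  · subst hx; simp
  · simp [hx, isSquare_neg_iff_not_isSquare h hx]

lemma ncard_setOf_isSquare (h : ¬ IsSquare (-1 : F)) :
    {x : F | x ≠ 0 ∧ IsSquare x}.ncard = (Fintype.card F - 1) / 2 := by
  set A := {x : F | x ≠ 0 ∧ IsSquare x}
  have hunion : A ∪ -A = {0}ᶜ := by
    ext x
    rw [neg_setOf_isSquare h]
    by_cases hx : x = 0
    · subst hx; simp [A]
    · simp [A, hx, em]
  have hdisj : Disjoint A (-A) := by
    rw [neg_setOf_isSquare h, Set.disjoint_left]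
    exact fun x hx hx' => hx' hx.2
  have hcard := Set.ncard_union_eq hdisj
  rw [hunion, Set.ncard_neg, Set.ncard_compl, Set.ncard_singleton, Nat.card_eq_fintype_card] at hcard
  omega

end FiniteField

/-- Let q = 3^(2n+1), m = 3^(n+1) and let F be a field with q elements. The
action of Fˣ on F \ {0} given by k · β = k^(m+1)·β has exactly two orbits:
the orbit of 1, namely the set of nonzero squares, and the orbit of −1, namely
the set of nonsquares; each has size (q−1)/2. -/
theorem stmt_17 (n : ℕ) {F : Type*} [Field F] [Fintype F]
    (hF : Fintype.card F = 3 ^ (2 * n + 1)) :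
    {δ : F | ∃ κ : Fˣ, (κ : F) ^ (3 ^ (n + 1) + 1) * 1 = δ}
        = {x : F | x ≠ 0 ∧ IsSquare x} ∧
      {δ : F | ∃ κ : Fˣ, (κ : F) ^ (3 ^ (n + 1) + 1) * (-1) = δ}
        = {x : F | ¬ IsSquare x} ∧
      Nat.card {δ : F | ∃ κ : Fˣ, (κ : F) ^ (3 ^ (n + 1) + 1) * 1 = δ}
        = (3 ^ (2 * n + 1) - 1) / 2 ∧
      Nat.card {δ : F | ∃ κ : Fˣ, (κ : F) ^ (3 ^ (n + 1) + 1) * (-1) = δ}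
        = (3 ^ (2 * n + 1) - 1) / 2 := by
  have hm1 : ¬ IsSquare (-1 : F) := by
    rw [FiniteField.isSquare_neg_one_iff, hF, Nat.three_pow_two_mul_add_one_mod_four]
    simp
  have hsq : {δ : F | ∃ κ : Fˣ, (κ : F) ^ (3 ^ (n + 1) + 1) * 1 = δ}
      = {x : F | x ≠ 0 ∧ IsSquare x} := by
    simp only [mul_one]
    refine FiniteField.setOf_exists_unit_pow_eq ?_ (hF ▸ Nat.three_pow_succ_sq_sub_one_modEq n)
    exact (Odd.pow (by decide : Odd 3)).add_one
  have hnsq : {δ : F | ∃ κ : Fˣ, (κ : F) ^ (3 ^ (n + 1) + 1) * (-1) = δ}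
      = {x : F | ¬ IsSquare x} := by
    rw [← FiniteField.neg_setOf_isSquare hm1, ← hsq]
    ext x
    simp [neg_eq_iff_eq_neg]
  refine ⟨hsq, hnsq, ?_, ?_⟩
  · rw [hsq, Nat.card_coe_set_eq, FiniteField.ncard_setOf_isSquare hm1, hF]
  · rw [hnsq, ← FiniteField.neg_setOf_isSquare hm1, Nat.card_coe_set_eq, Set.ncard_neg,
      FiniteField.ncard_setOf_isSquare hm1, hF]
end

section
/- Let 𝒟 be a non-trivial 2-(v,k,λ) design (2 < k < v−1) in which every point lies in exactly r blocks, with gcd(r,λ) = 1, and let G be a finite flag-transitive automorphism group of 𝒟. Then the action of G on the point set 𝒫 is primitive (point-primitive). -/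
open Pointwise

/-- A primitive action: the action is pretransitive and every block is trivial.
(This matches Mathlib's `MulAction.IsPreprimitive`, not present in this version.) -/
structure IsPreprimitive (G X : Type*) [Group G] [MulAction G X] : Prop where
  toIsPretransitive : MulAction.IsPretransitive G X
  isTrivialBlock : ∀ {B : Set X}, MulAction.IsBlock G B → MulAction.IsTrivialBlock B

open Matrix in
lemma fisher_ineq {P : Type*} [Fintype P] [DecidableEq P] (r lam : ℕ) (𝓑 : Finset (Finset P))
    (hlt : lam < r)
    (hlam : ∀ x y : P, x ≠ y → (𝓑.filter (fun B => x ∈ B ∧ y ∈ B)).card = lam)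
    (hr : ∀ x : P, (𝓑.filter (fun B => x ∈ B)).card = r) :
    Fintype.card P ≤ 𝓑.card := by
  classical
  set a : ℚ := (r : ℚ) - lam with ha
  have ha0 : 0 < a := by
    have : (lam : ℚ) < r := by exact_mod_cast hlt
    simp [ha]; linarith
  set N : Matrix P {B // B ∈ 𝓑} ℚ := fun x B => if x ∈ B.1 then 1 else 0 with hN
  have hMent : N * Nᵀ = a • (1 : Matrix P P ℚ)
      + Matrix.replicateCol Unit (fun _ : P => (lam : ℚ)) * Matrix.replicateRow Unit (fun _ : P => (1:ℚ)) := by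
    ext x y
    rw [Matrix.mul_apply]
    have h1 : ∀ B : {B // B ∈ 𝓑}, N x B * Nᵀ B y
        = if x ∈ B.1 ∧ y ∈ B.1 then (1 : ℚ) else 0 := by
      intro B
      rw [Matrix.transpose_apply]; simp only [hN]
      split_ifs with h1 h2 h3 <;> simp_all
    rw [Finset.sum_congr rfl (fun B _ => h1 B), Finset.univ_eq_attach,
      Finset.sum_attach 𝓑 (fun B => if x ∈ B ∧ y ∈ B then (1 : ℚ) else 0),
      Finset.sum_boole]
    by_cases hxy : x = y
    · subst hxy
      have : 𝓑.filter (fun B => x ∈ B ∧ x ∈ B) = 𝓑.filter (fun B => x ∈ B) := by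
        simp
      rw [this, hr x]
      simp [Matrix.mul_apply, Matrix.one_apply, ha]
    · rw [hlam x y hxy]
      simp [Matrix.mul_apply, Matrix.one_apply, hxy]
  have hAunit : IsUnit (a • (1 : Matrix P P ℚ)).det := by
    rw [Matrix.det_smul, Matrix.det_one, mul_one]
    exact isUnit_iff_ne_zero.2 (pow_ne_zero _ (ne_of_gt ha0))
  have hAinv : (a • (1 : Matrix P P ℚ))⁻¹ = a⁻¹ • 1 := by
    apply Matrix.inv_eq_right_inv
    rw [Matrix.smul_mul, Matrix.mul_smul, one_mul, smul_smul,
      mul_inv_cancel₀ (ne_of_gt ha0), one_smul]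
  have hdet : (N * Nᵀ).det ≠ 0 := by
    rw [hMent, Matrix.det_add_replicateCol_mul_replicateRow hAunit, hAinv]
    have hpos : (0 : ℚ) < (1 + Matrix.replicateRow Unit (fun _ : P => (1:ℚ)) * (a⁻¹ • (1 : Matrix P P ℚ))
        * Matrix.replicateCol Unit (fun _ : P => (lam : ℚ))).det := by
      rw [Matrix.det_unique]
      simp [Matrix.mul_apply, Matrix.one_apply, Matrix.replicateRow_apply, Matrix.replicateCol_apply,
        Finset.sum_ite_eq]
      positivity
    have : (a • (1 : Matrix P P ℚ)).det ≠ 0 := hAunit.ne_zero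
    exact mul_ne_zero this (ne_of_gt hpos)
  have hrk : Fintype.card P = (N * Nᵀ).rank :=
    (Matrix.rank_of_isUnit _ ((Matrix.isUnit_iff_isUnit_det _).2 (isUnit_iff_ne_zero.2 hdet))).symm
  calc Fintype.card P = (N * Nᵀ).rank := hrk
    _ ≤ N.rank := Matrix.rank_mul_le_left N Nᵀ
    _ ≤ Fintype.card {B // B ∈ 𝓑} := Matrix.rank_le_card_width N
    _ = 𝓑.card := Fintype.card_coe 𝓑

/-- (Dembowski) If 𝒟 is a non-trivial 2-(v,k,λ) design (2 < k < v−1) with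
gcd(r,λ) = 1 and G is a finite flag-transitive automorphism group of 𝒟, then
G is point-primitive. -/
theorem stmt_19 {P : Type*} [Fintype P] [DecidableEq P]
    (v r k lam : ℕ) (𝓑 : Finset (Finset P))
    (hv : Fintype.card P = v)
    (hk : ∀ B ∈ 𝓑, B.card = k)
    (hk2 : 2 < k) (hkv : k < v - 1)
    (hlam1 : 1 ≤ lam)
    (hlam : ∀ x y : P, x ≠ y → (𝓑.filter (fun B => x ∈ B ∧ y ∈ B)).card = lam)
    (hr : ∀ x : P, (𝓑.filter (fun B => x ∈ B)).card = r)
    (hcop : Nat.gcd r lam = 1)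
    {G : Type*} [Group G] [Finite G] [MulAction G P]
    (hG : ∀ (g : G), ∀ B ∈ 𝓑, g • B ∈ 𝓑)
    (hft : ∀ B₁ ∈ 𝓑, ∀ B₂ ∈ 𝓑, ∀ α₁ ∈ B₁, ∀ α₂ ∈ B₂,
      ∃ g : G, g • α₁ = α₂ ∧ g • B₁ = B₂) :
    IsPreprimitive G P := by
  classical
  have hv5 : 5 ≤ v := by omega
  have hPcard : 1 < Fintype.card P := by omega
  haveI : Nontrivial P := Fintype.one_lt_card_iff_nontrivial.mp hPcard
  -- every point lies on a block
  have hex : ∀ x : P, ∃ B ∈ 𝓑, x ∈ B := by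
    intro x
    obtain ⟨y, hy⟩ := exists_ne x
    have h := hlam y x hy
    have hne : (𝓑.filter (fun B => y ∈ B ∧ x ∈ B)).Nonempty := by
      rw [← Finset.card_pos, h]; omega
    obtain ⟨B, hB⟩ := hne
    rw [Finset.mem_filter] at hB
    exact ⟨B, hB.1, hB.2.2⟩
  -- transitivity
  have htrans : MulAction.IsPretransitive G P := by
    constructor
    intro x y
    obtain ⟨Bx, hBx, hxBx⟩ := hex x
    obtain ⟨By, hBy, hyBy⟩ := hex y
    obtain ⟨g, hg, -⟩ := hft Bx hBx By hBy x hxBx y hyBy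
    exact ⟨g, hg⟩
  haveI := htrans
  -- r ≥ 1
  obtain ⟨x0⟩ : Nonempty P := inferInstance
  have hr1 : 1 ≤ r := by
    obtain ⟨B, hB, hxB⟩ := hex x0
    have h : 0 < (𝓑.filter (fun B => x0 ∈ B)).card :=
      Finset.card_pos.mpr ⟨B, Finset.mem_filter.mpr ⟨hB, hxB⟩⟩
    rw [hr x0] at h
    omega
  -- double counting
  have count : ∀ (F : Finset (Finset P)) (S : Finset P),
      ∑ B ∈ F, (B ∩ S).card = ∑ y ∈ S, (F.filter (fun B => y ∈ B)).card := by
    intro F S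
    have h1 : ∀ B : Finset P, (B ∩ S).card = ∑ y ∈ S, if y ∈ B then 1 else 0 := by
      intro B
      rw [← Finset.card_filter, Finset.filter_mem_eq_inter, Finset.inter_comm]
    rw [Finset.sum_congr rfl (fun B _ => h1 B), Finset.sum_comm]
    exact Finset.sum_congr rfl (fun y _ => (Finset.card_filter _ _).symm)
  have countx : ∀ (x : P) (S : Finset P), x ∈ S →
      ∑ B ∈ 𝓑.filter (fun B => x ∈ B), (B ∩ S).card = r + (S.card - 1) * lam := by
    intro x S hxS
    rw [count, ← Finset.add_sum_erase S _ hxS]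
    have h1 : ((𝓑.filter (fun B => x ∈ B)).filter (fun B => x ∈ B)).card = r := by
      rw [Finset.filter_filter]
      simp only [and_self]
      exact hr x
    have h2 : ∀ y ∈ S.erase x,
        ((𝓑.filter (fun B => x ∈ B)).filter (fun B => y ∈ B)).card = lam := by
      intro y hy
      rw [Finset.filter_filter]
      exact hlam x y (Ne.symm (Finset.ne_of_mem_erase hy))
    rw [h1, Finset.sum_congr rfl h2, Finset.sum_const, smul_eq_mul,
      Finset.card_erase_of_mem hxS]
  -- r * k = r + (v-1) * lam
  have hrk : r * k = r + (v - 1) * lam := by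
    have h := countx x0 Finset.univ (Finset.mem_univ x0)
    have hL : ∑ B ∈ 𝓑.filter (fun B => x0 ∈ B), (B ∩ Finset.univ).card = r * k := by
      rw [Finset.sum_congr rfl (fun B hB => by
        rw [Finset.inter_univ, hk B (Finset.mem_filter.mp hB).1]),
        Finset.sum_const, smul_eq_mul, hr x0]
    rw [hL, Finset.card_univ, hv] at h
    exact h
  -- b * k = v * r
  have hbk : 𝓑.card * k = v * r := by
    have h := count 𝓑 Finset.univ
    have hL : ∑ B ∈ 𝓑, (B ∩ Finset.univ).card = 𝓑.card * k := by
      rw [Finset.sum_congr rfl (fun B hB => by rw [Finset.inter_univ, hk B hB]),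
        Finset.sum_const, smul_eq_mul]
    have hR : ∑ y ∈ Finset.univ, ((𝓑.filter (fun B => y ∈ B))).card = v * r := by
      rw [Finset.sum_congr rfl (fun y _ => hr y), Finset.sum_const, smul_eq_mul,
        Finset.card_univ, hv]
    rw [hL, hR] at h
    exact h
  -- r*(k-1) = (v-1)*lam
  have hrk' : r * (k - 1) = (v - 1) * lam := by
    have e3 : r * (k - 1) + r = r * k := by
      have : k - 1 + 1 = k := by omega
      calc r * (k - 1) + r = r * ((k - 1) + 1) := by ring
        _ = r * k := by rw [this]
    have h4 : r + r * (k - 1) = r + (v - 1) * lam := by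
      rw [Nat.add_comm r (r * (k-1)), e3]; exact hrk
    exact Nat.add_left_cancel h4
  have hcop' : Nat.Coprime r lam := hcop
  have hrdvd1 : r ∣ v - 1 :=
    hcop'.dvd_of_dvd_mul_right (hrk' ▸ Dvd.intro _ rfl)
  -- lam < r
  have hlamr : lam < r := by
    by_contra hcon
    push_neg at hcon
    have h1 : r * (k - 1) ≤ lam * (k - 1) := Nat.mul_le_mul_right _ hcon
    have h2 : lam * (k - 1) < lam * (v - 1) :=
      mul_lt_mul_of_pos_left (by omega) (by omega)
    have h3 := h1.trans_lt h2
    rw [mul_comm lam (v - 1), ← hrk'] at h3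
    exact lt_irrefl _ h3
  have hr2 : 2 ≤ r := by omega
  -- primitivity
  refine ⟨htrans, fun {C} hC => ?_⟩
  by_contra hCtriv
  rw [MulAction.IsTrivialBlock] at hCtriv
  push_neg at hCtriv
  obtain ⟨hCsub, hCuniv⟩ := hCtriv
  obtain ⟨α, hα, β, hβ, hαβ⟩ := hCsub
  set C' : Finset P := C.toFinset with hC'def
  have hαC' : α ∈ C' := Set.mem_toFinset.mpr hα
  have hβC' : β ∈ C' := Set.mem_toFinset.mpr hβ
  have hc2 : 2 ≤ C'.card := Finset.one_lt_card.mpr ⟨α, hαC', β, hβC', hαβ⟩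
  -- stabilizer of α preserves C'
  have hCeq : ∀ g : G, g • α = α → g • C' = C' := by
    intro g hg
    have hgC : g • C = C := by
      by_contra hne
      have h1 : g • C ≠ (1 : G) • C := by rwa [one_smul]
      have hdisj := hC h1
      rw [one_smul] at hdisj
      have hmem : α ∈ g • C := hg ▸ Set.smul_mem_smul_set hα
      exact (Set.disjoint_left.mp hdisj hmem) hα
    apply Finset.coe_injective
    rw [Finset.coe_smul_finset, hC'def, Set.coe_toFinset, hgC]
  -- all blocks through α meet C' in the same number of points
  obtain ⟨B₀, hB₀, hαB₀⟩ := hex α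
  set e : ℕ := (B₀ ∩ C').card with hedef
  have he : ∀ B ∈ 𝓑, α ∈ B → (B ∩ C').card = e := by
    intro B hB hαB
    obtain ⟨g, hgα, hgB⟩ := hft B₀ hB₀ B hB α hαB₀ α hαB
    rw [← hgB, ← hCeq g hgα, ← Finset.smul_finset_inter, Finset.card_smul_finset]
  have he1 : 1 ≤ e := by
    have h : 0 < (B₀ ∩ C').card :=
      Finset.card_pos.mpr ⟨α, Finset.mem_inter.mpr ⟨hαB₀, hαC'⟩⟩
    rw [← hedef] at h
    omega
  -- r * e = r + (c-1) * lam
  have hre : r * e = r + (C'.card - 1) * lam := by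
    have h := countx α C' hαC'
    have hL : ∑ B ∈ 𝓑.filter (fun B => α ∈ B), (B ∩ C').card = r * e := by
      rw [Finset.sum_congr rfl (fun B hB => he B (Finset.mem_filter.mp hB).1
        (Finset.mem_filter.mp hB).2), Finset.sum_const, smul_eq_mul, hr α]
    rw [hL] at h
    exact h
  have hre' : r * (e - 1) = (C'.card - 1) * lam := by
    have e3 : r * (e - 1) + r = r * e := by
      have h0 : e - 1 + 1 = e := by omega
      calc r * (e - 1) + r = r * ((e - 1) + 1) := by ring
        _ = r * e := by rw [h0]
    have h4 : r + r * (e - 1) = r + (C'.card - 1) * lam := by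
      rw [Nat.add_comm r (r * (e - 1)), e3]; exact hre
    exact Nat.add_left_cancel h4
  have hrdvd2 : r ∣ C'.card - 1 :=
    hcop'.dvd_of_dvd_mul_right (hre' ▸ Dvd.intro _ rfl)
  -- c divides v
  have hCne : C.Nonempty := ⟨α, hα⟩
  have hdvd : C'.card ∣ v := by
    have h := hC.ncard_dvd_card hCne
    rwa [Set.ncard_eq_toFinset_card' C, Nat.card_eq_fintype_card, hv] at h
  have hCu : C' ≠ Finset.univ := by
    intro h
    apply hCuniv
    rw [← Set.coe_toFinset C, ← hC'def, h, Finset.coe_univ]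
  have hclt : C'.card < v := by
    have := Finset.card_lt_card (Finset.ssubset_univ_iff.mpr hCu)
    rwa [Finset.card_univ, hv] at this
  obtain ⟨m, hm⟩ := hdvd
  have hm2 : 2 ≤ m := by
    by_contra hcon
    push_neg at hcon
    interval_cases m
    · omega
    · omega
  set c1 := C'.card - 1 with hc1def
  set m1 := m - 1 with hm1def
  have hveq : v = c1 * m1 + c1 + m1 + 1 := by
    have h1 : C'.card = c1 + 1 := by omega
    have h2 : m = m1 + 1 := by omega
    rw [hm, h1, h2]; ring
  have hrm1 : r ∣ m1 := by
    have hq : r ∣ c1 * m1 := dvd_mul_of_dvd_left hrdvd2 m1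
    have h5 : m1 = (v - 1) - c1 * m1 - c1 := by
      set q := c1 * m1 with hqdef
      omega
    rw [h5]
    exact Nat.dvd_sub (Nat.dvd_sub hrdvd1 hq) hrdvd2
  have hc11 : 1 ≤ c1 := by omega
  have hm11 : 1 ≤ m1 := by omega
  have hrc : r ≤ c1 := Nat.le_of_dvd hc11 hrdvd2
  have hrm : r ≤ m1 := Nat.le_of_dvd hm11 hrm1
  have hvbig : r * r + 2 * r ≤ v - 1 := by
    have hq2 : r * r ≤ c1 * m1 := Nat.mul_le_mul hrc hrm
    set q := c1 * m1 with hqdef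
    set p := r * r with hpdef
    omega
  -- Fisher's inequality and the contradiction
  have hfish : v ≤ 𝓑.card := by
    have := fisher_ineq r lam 𝓑 hlamr hlam hr
    omega
  have hkr : k ≤ r := by
    have h6 : v * k ≤ v * r := by
      calc v * k ≤ 𝓑.card * k := Nat.mul_le_mul_right k hfish
        _ = v * r := hbk
    exact Nat.le_of_mul_le_mul_left h6 (by omega)
  have hfinal : (v - 1) * lam < (v - 1) * lam := by
    calc (v - 1) * lam = r * (k - 1) := hrk'.symm
      _ ≤ r * (r - 1) := Nat.mul_le_mul_left r (by omega)
      _ < r * r := mul_lt_mul_of_pos_left (by omega) (by omega)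
      _ ≤ v - 1 := by omega
      _ ≤ (v - 1) * lam := Nat.le_mul_of_pos_right _ (by omega)
  exact lt_irrefl _ hfinal
end
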